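/- Let (u, v, ρ, s) be a C¹ supersonic solution of the smooth-flow 2D steady full Euler system on U, with flow angle σ, Mach angle A ∈ (0, π/2), α = σ + A, β = σ − A, κ = 2/(γ−1), j = c/(γ(γ−1)s). Define R₊ = ∂₊c − (j/κ)∂₊s and R₋ = ∂₋c − (j/κ)∂₋s. Then the flow angle satisfies ∂₀σ = (R₋ − R₊) / ((γ−1)q) on U. -/

import Mathlib

open Real

noncomputable section

/-- Partial derivative in the `x` direction. -/
def pdx (f : ℝ × ℝ → ℝ) (p : ℝ × ℝ) : ℝ := fderiv ℝ f p (1, 0)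

/-- Partial derivative in the `y` direction. -/
def pdy (f : ℝ × ℝ → ℝ) (p : ℝ × ℝ) : ℝ := fderiv ℝ f p (0, 1)

/-- Directional derivative along the direction with angle `θ p`. -/
def dd (θ : ℝ × ℝ → ℝ) (f : ℝ × ℝ → ℝ) (p : ℝ × ℝ) : ℝ :=
  Real.cos (θ p) * pdx f p + Real.sin (θ p) * pdy f p

/-- Sound speed `c = √(γ s ρ^(γ-1))`. -/
def sound (γ : ℝ) (ρ s : ℝ × ℝ → ℝ) (p : ℝ × ℝ) : ℝ :=
  Real.sqrt (γ * s p * ρ p ^ (γ - 1))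

/-- Flow speed `q = √(u² + v²)`. -/
def speed (u v : ℝ × ℝ → ℝ) (p : ℝ × ℝ) : ℝ :=
  Real.sqrt (u p ^ 2 + v p ^ 2)

/-- Vorticity `ω = u_y − vₓ`. -/
def vort (u v : ℝ × ℝ → ℝ) (p : ℝ × ℝ) : ℝ := pdy u p - pdx v p

/-- `j = c/(γ(γ−1)s)`. -/
def jay (γ : ℝ) (ρ s : ℝ × ℝ → ℝ) (p : ℝ × ℝ) : ℝ :=
  sound γ ρ s p / (γ * (γ - 1) * s p)

/-- `R₊ = ∂₊c − (j/κ)∂₊s`, with `κ = 2/(γ−1)`. -/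
def Rplus (γ : ℝ) (u v ρ s σ A : ℝ × ℝ → ℝ) (p : ℝ × ℝ) : ℝ :=
  dd (fun r => σ r + A r) (sound γ ρ s) p -
    (jay γ ρ s p / (2 / (γ - 1))) * dd (fun r => σ r + A r) s p

/-- `R₋ = ∂₋c − (j/κ)∂₋s`, with `κ = 2/(γ−1)`. -/
def Rminus (γ : ℝ) (u v ρ s σ A : ℝ × ℝ → ℝ) (p : ℝ × ℝ) : ℝ :=
  dd (fun r => σ r - A r) (sound γ ρ s) p -
    (jay γ ρ s p / (2 / (γ - 1))) * dd (fun r => σ r - A r) s p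

/-!
Since `u sin σ - v cos σ` vanishes identically, `q ∇σ = cos σ ∇v - sin σ ∇u`; along a streamline
the momentum equations turn this into `ρ q² ∂₀σ = sin σ pₓ - cos σ p_y`. On the other hand `c` is
a function of `ρ` and `s`, and `∇c - (j/κ)∇s = (γ - 1)/(2ρc) ∇p`, so `R± = (γ - 1)/(2ρc) ∂±p`.
Finally `∂₋ - ∂₊ = 2 sin A (sin σ ∂ₓ - cos σ ∂_y)` and `sin A = c/q`.
-/

open Filter Topology

def pressure (γ : ℝ) (ρ s : ℝ × ℝ → ℝ) (p : ℝ × ℝ) : ℝ := s p * ρ p ^ γ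

theorem dd_eq_fderiv_apply (θ f : ℝ × ℝ → ℝ) (p : ℝ × ℝ) :
    dd θ f p = fderiv ℝ f p (cos (θ p), sin (θ p)) := by
  have he : ((cos (θ p), sin (θ p)) : ℝ × ℝ) = cos (θ p) • (1, 0) + sin (θ p) • (0, 1) := by
    ext <;> simp
  rw [he, map_add, map_smul, map_smul, smul_eq_mul, smul_eq_mul, dd, pdx, pdy]

theorem dd_sub_sub_dd_add (σ A f : ℝ × ℝ → ℝ) (p : ℝ × ℝ) :
    dd (fun r => σ r - A r) f p - dd (fun r => σ r + A r) f p =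
      2 * sin (A p) * (sin (σ p) * pdx f p - cos (σ p) * pdy f p) := by
  simp only [dd, cos_add, sin_add, cos_sub, sin_sub]
  ring

theorem mul_fderiv_angle_apply_of_polar {E : Type*} [NormedAddCommGroup E] [NormedSpace ℝ E]
    {u v q σ : E → ℝ} {p : E}
    (hu : DifferentiableAt ℝ u p) (hv : DifferentiableAt ℝ v p) (hσ : DifferentiableAt ℝ σ p)
    (huσ : ∀ᶠ r in 𝓝 p, u r = q r * cos (σ r)) (hvσ : ∀ᶠ r in 𝓝 p, v r = q r * sin (σ r))
    (e : E) :
    q p * fderiv ℝ σ p e = cos (σ p) * fderiv ℝ v p e - sin (σ p) * fderiv ℝ u p e := by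
  have hzero : fderiv ℝ (fun r => u r * sin (σ r) - v r * cos (σ r)) p = 0 := by
    have hconst : (fun r => u r * sin (σ r) - v r * cos (σ r)) =ᶠ[𝓝 p] fun _ => (0 : ℝ) := by
      filter_upwards [huσ, hvσ] with r hur hvr
      rw [hur, hvr]; ring
    rw [hconst.fderiv_eq, fderiv_const_apply]
  have hderiv := ((hu.hasFDerivAt.mul hσ.hasFDerivAt.sin).sub
    (hv.hasFDerivAt.mul hσ.hasFDerivAt.cos)).fderiv
  have he := congrArg (· e) (hderiv.symm.trans hzero)
  simp only [sub_apply, add_apply,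
    smul_apply, smul_eq_mul, zero_apply] at he
  linear_combination he - cos (σ p) * fderiv ℝ σ p e * huσ.self_of_nhds
    - sin (σ p) * fderiv ℝ σ p e * hvσ.self_of_nhds
    - q p * fderiv ℝ σ p e * sin_sq_add_cos_sq (σ p)

section Thermodynamics

variable {γ : ℝ} {ρ s : ℝ × ℝ → ℝ} {p : ℝ × ℝ}

theorem sound_sq (hγ : 0 < γ) (hρp : 0 < ρ p) (hsp : 0 < s p) :
    sound γ ρ s p ^ 2 = γ * s p * ρ p ^ (γ - 1) :=
  sq_sqrt (by positivity)

theorem sound_pos (hγ : 0 < γ) (hρp : 0 < ρ p) (hsp : 0 < s p) : 0 < sound γ ρ s p :=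
  sqrt_pos.2 (by positivity)

theorem hasFDerivAt_sound (hγ : 0 < γ) (hρ : DifferentiableAt ℝ ρ p)
    (hs : DifferentiableAt ℝ s p) (hρp : 0 < ρ p) (hsp : 0 < s p) :
    HasFDerivAt (sound γ ρ s)
      ((sound γ ρ s p / (2 * s p)) • fderiv ℝ s p +
        ((γ - 1) * sound γ ρ s p / (2 * ρ p)) • fderiv ℝ ρ p) p := by
  have hw : HasFDerivAt (fun r => sqrt (γ * s r * ρ r ^ (γ - 1))) _ p :=
    ((hs.hasFDerivAt.const_mul γ).mul (hρ.hasFDerivAt.rpow_const (p := γ - 1)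
      (Or.inl hρp.ne'))).sqrt (by simp only [Pi.mul_apply]; positivity)
  refine hw.congr_fderiv (ContinuousLinearMap.ext fun e => ?_)
  have hc := sound_pos hγ hρp hsp
  have hc2 := sound_sq hγ hρp hsp
  simp only [add_apply, smul_apply, smul_eq_mul, Pi.mul_apply]
  rw [rpow_sub_one hρp.ne' (γ - 1)]
  rw [sound] at hc hc2 ⊢
  field_simp
  linear_combination -(ρ p * fderiv ℝ s p e + (γ - 1) * s p * fderiv ℝ ρ p e) * hc2

theorem hasFDerivAt_pressure (hρ : DifferentiableAt ℝ ρ p) (hs : DifferentiableAt ℝ s p)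
    (hρp : ρ p ≠ 0) :
    HasFDerivAt (pressure γ ρ s)
      (ρ p ^ γ • fderiv ℝ s p + (γ * s p * ρ p ^ (γ - 1)) • fderiv ℝ ρ p) p := by
  refine (hs.hasFDerivAt.mul (hρ.hasFDerivAt.rpow_const (p := γ) (Or.inl hρp))).congr_fderiv
    (ContinuousLinearMap.ext fun e => ?_)
  simp only [add_apply, smul_apply, smul_eq_mul]
  ring

theorem dd_sound_sub_jay_mul_dd (hγ : 0 < γ) (hγ1 : γ ≠ 1) (hρ : DifferentiableAt ℝ ρ p)
    (hs : DifferentiableAt ℝ s p) (hρp : 0 < ρ p) (hsp : 0 < s p) (θ : ℝ × ℝ → ℝ) :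
    dd θ (sound γ ρ s) p - jay γ ρ s p / (2 / (γ - 1)) * dd θ s p =
      (γ - 1) / (2 * ρ p * sound γ ρ s p) * dd θ (pressure γ ρ s) p := by
  have hc := sound_pos hγ hρp hsp
  have hc2 := sound_sq hγ hρp hsp
  have hγ1' : γ - 1 ≠ 0 := sub_ne_zero.2 hγ1
  simp only [dd_eq_fderiv_apply, (hasFDerivAt_sound hγ hρ hs hρp hsp).fderiv,
    (hasFDerivAt_pressure hρ hs hρp.ne').fderiv, add_apply, smul_apply, smul_eq_mul, jay]
  have hpow : ρ p ^ γ = ρ p ^ (γ - 1) * ρ p := by rw [← rpow_add_one hρp.ne', sub_add_cancel]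
  rw [hpow]
  set e : ℝ × ℝ := (cos (θ p), sin (θ p))
  field_simp
  linear_combination (γ - 1) * (ρ p * fderiv ℝ s p e + γ * s p * fderiv ℝ ρ p e) * hc2

end Thermodynamics

theorem mul_sq_mul_dd_angle_of_momentum {u v q σ ρ P : ℝ × ℝ → ℝ} {p : ℝ × ℝ}
    (hu : DifferentiableAt ℝ u p) (hv : DifferentiableAt ℝ v p) (hσ : DifferentiableAt ℝ σ p)
    (huσ : ∀ᶠ r in 𝓝 p, u r = q r * cos (σ r)) (hvσ : ∀ᶠ r in 𝓝 p, v r = q r * sin (σ r))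
    (hρp : ρ p ≠ 0)
    (hmomx : u p * pdx u p + v p * pdy u p + (ρ p)⁻¹ * pdx P p = 0)
    (hmomy : u p * pdx v p + v p * pdy v p + (ρ p)⁻¹ * pdy P p = 0) :
    ρ p * q p ^ 2 * dd σ σ p = sin (σ p) * pdx P p - cos (σ p) * pdy P p := by
  have hσe := mul_fderiv_angle_apply_of_polar hu hv hσ huσ hvσ (cos (σ p), sin (σ p))
  simp only [← dd_eq_fderiv_apply, dd] at hσe ⊢
  linear_combination ρ p * q p * hσe - ρ p * sin (σ p) * hmomx + ρ p * cos (σ p) * hmomy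
    + (ρ p * (sin (σ p) * pdx u p - cos (σ p) * pdx v p)) * huσ.self_of_nhds
    + (ρ p * (sin (σ p) * pdy u p - cos (σ p) * pdy v p)) * hvσ.self_of_nhds
    + (sin (σ p) * pdx P p - cos (σ p) * pdy P p) * mul_inv_cancel₀ hρp

theorem stmt_17_general (γ : ℝ) (hγ : 1 < γ) (U : Set (ℝ × ℝ)) (hU : IsOpen U)
    (u v ρ s σ A : ℝ × ℝ → ℝ)
    (hu : ContDiffOn ℝ 1 u U) (hv : ContDiffOn ℝ 1 v U)
    (hρ : ContDiffOn ℝ 1 ρ U) (hs : ContDiffOn ℝ 1 s U)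
    (hσ : ContDiffOn ℝ 1 σ U)
    (hρpos : ∀ p ∈ U, 0 < ρ p) (hspos : ∀ p ∈ U, 0 < s p)
    (hmomx : ∀ p ∈ U,
      u p * pdx u p + v p * pdy u p + (ρ p)⁻¹ * pdx (fun q => s q * ρ q ^ γ) p = 0)
    (hmomy : ∀ p ∈ U,
      u p * pdx v p + v p * pdy v p + (ρ p)⁻¹ * pdy (fun q => s q * ρ q ^ γ) p = 0)
    (hsup : ∀ p ∈ U, (sound γ ρ s p) ^ 2 < u p ^ 2 + v p ^ 2)
    (huσ : ∀ p ∈ U, u p = speed u v p * Real.cos (σ p))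
    (hvσ : ∀ p ∈ U, v p = speed u v p * Real.sin (σ p))
    (hsinA : ∀ p ∈ U, Real.sin (A p) = sound γ ρ s p / speed u v p)
    :
    ∀ p ∈ U,
      dd σ σ p =
        (Rminus γ u v ρ s σ A p - Rplus γ u v ρ s σ A p) / ((γ - 1) * speed u v p) := by
  intro p hp
  have hpU : U ∈ 𝓝 p := hU.mem_nhds hp
  have hdiff {f : ℝ × ℝ → ℝ} (hf : ContDiffOn ℝ 1 f U) : DifferentiableAt ℝ f p :=
    (hf.contDiffAt hpU).differentiableAt one_ne_zero
  have hγ0 : 0 < γ := by linarith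
  have hγ1 : γ - 1 ≠ 0 := by linarith
  have hρp := hρpos p hp
  have hsp := hspos p hp
  have hq : 0 < speed u v p := sqrt_pos.2 ((sq_nonneg _).trans_lt (hsup p hp))
  have hc := sound_pos hγ0 hρp hsp
  have htransport := mul_sq_mul_dd_angle_of_momentum (P := pressure γ ρ s) (hdiff hu) (hdiff hv)
    (hdiff hσ) (eventually_of_mem hpU huσ) (eventually_of_mem hpU hvσ) hρp.ne'
    (hmomx p hp) (hmomy p hp)
  have hR := dd_sound_sub_jay_mul_dd hγ0 hγ.ne' (hdiff hρ) (hdiff hs) hρp hsp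
  rw [Rminus, Rplus, hR, hR, ← mul_sub, dd_sub_sub_dd_add, hsinA p hp]
  field_simp
  linear_combination htransport

/-- the flow angle satisfies `∂₀σ = (R₋ − R₊)/((γ−1)q)`. -/
theorem stmt_17 (γ : ℝ) (hγ : 1 < γ) (U : Set (ℝ × ℝ)) (hU : IsOpen U)
    (u v ρ s σ A : ℝ × ℝ → ℝ)
    (hu : ContDiffOn ℝ 1 u U) (hv : ContDiffOn ℝ 1 v U)
    (hρ : ContDiffOn ℝ 1 ρ U) (hs : ContDiffOn ℝ 1 s U)
    (hσ : ContDiffOn ℝ 1 σ U) (hA : ContDiffOn ℝ 1 A U)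
    (hρpos : ∀ p ∈ U, 0 < ρ p) (hspos : ∀ p ∈ U, 0 < s p)
    (hmass : ∀ p ∈ U, pdx (fun q => ρ q * u q) p + pdy (fun q => ρ q * v q) p = 0)
    (hmomx : ∀ p ∈ U,
      u p * pdx u p + v p * pdy u p + (ρ p)⁻¹ * pdx (fun q => s q * ρ q ^ γ) p = 0)
    (hmomy : ∀ p ∈ U,
      u p * pdx v p + v p * pdy v p + (ρ p)⁻¹ * pdy (fun q => s q * ρ q ^ γ) p = 0)
    (hent : ∀ p ∈ U, u p * pdx s p + v p * pdy s p = 0)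
    (hsup : ∀ p ∈ U, (sound γ ρ s p) ^ 2 < u p ^ 2 + v p ^ 2)
    (huσ : ∀ p ∈ U, u p = speed u v p * Real.cos (σ p))
    (hvσ : ∀ p ∈ U, v p = speed u v p * Real.sin (σ p))
    (hsinA : ∀ p ∈ U, Real.sin (A p) = sound γ ρ s p / speed u v p)
    (hA0 : ∀ p ∈ U, 0 < A p) (hA2 : ∀ p ∈ U, A p < Real.pi / 2)
    :
    ∀ p ∈ U,
      dd σ σ p =
        (Rminus γ u v ρ s σ A p - Rplus γ u v ρ s σ A p) / ((γ - 1) * speed u v p) :=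
  stmt_17_general γ hγ U hU u v ρ s σ A hu hv hρ hs hσ hρpos hspos hmomx hmomy hsup huσ hvσ hsinA

end
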